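/- The image Y₀ = p(ℝ^d) is a closed subset of ℝ^m. -/

import Mathlib

/-!
The invariant `Q v = ∑_{g ∈ G} |g v|²` is a polynomial `F` in the generators `p i`, so
`‖v‖ ≤ √(F (p v))`. Hence preimages under `p` of compact sets are bounded, i.e. `p` is a proper
map, and proper maps into `ℝ^m` are closed.
-/

open Matrix MvPolynomial

noncomputable section

/-- Action of an invertible real matrix on a vector in `ℝ^d`. -/
def act {d : ℕ} (g : GL (Fin d) ℝ) (v : Fin d → ℝ) : Fin d → ℝ :=
  (g : Matrix (Fin d) (Fin d) ℝ).mulVec v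

/-- Orbit of a vector under a subgroup of `GL (Fin d) ℝ`. -/
def orbitOf {d : ℕ} (G : Subgroup (GL (Fin d) ℝ)) (v : Fin d → ℝ) : Set (Fin d → ℝ) :=
  {x | ∃ g ∈ G, act g v = x}

/-- A quasi-isomorphism: a linear isomorphism sending `G`-orbits to `H`-orbits,
whose inverse sends `H`-orbits to `G`-orbits. -/
def IsQuasiIso {d e : ℕ} (G : Subgroup (GL (Fin d) ℝ)) (H : Subgroup (GL (Fin e) ℝ))
    (L : (Fin d → ℝ) ≃ₗ[ℝ] (Fin e → ℝ)) : Prop :=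
  (∀ v : Fin d → ℝ, ∃ w : Fin e → ℝ, ⇑L '' orbitOf G v = orbitOf H w) ∧
  (∀ w : Fin e → ℝ, ∃ v : Fin d → ℝ, ⇑L.symm '' orbitOf H w = orbitOf G v)

/-- `P` is a `G`-invariant polynomial. -/
def IsInv {d : ℕ} (G : Subgroup (GL (Fin d) ℝ)) (P : MvPolynomial (Fin d) ℝ) : Prop :=
  ∀ g ∈ G, ∀ v : Fin d → ℝ, eval (act g v) P = eval v P

/-- The polynomial map `ℝ^d → ℝ^m` given by a family of polynomials. -/
def evalMap {d m : ℕ} (p : Fin m → MvPolynomial (Fin d) ℝ) (v : Fin d → ℝ) : Fin m → ℝ :=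
  fun i => eval v (p i)

/-- Real Zariski closure of a subset of `ℝ^m`: the common zero set of all real
polynomials vanishing identically on `S`. -/
def zarClosure {m : ℕ} (S : Set (Fin m → ℝ)) : Set (Fin m → ℝ) :=
  {y | ∀ P : MvPolynomial (Fin m) ℝ, (∀ s ∈ S, eval s P = 0) → eval y P = 0}

/-- `G` contains no reflections: every nonidentity element `g` has `rank (g - 1) ≥ 2`. -/
def NoReflections {d : ℕ} (G : Subgroup (GL (Fin d) ℝ)) : Prop :=
  ∀ g ∈ G, g ≠ 1 → 2 ≤ ((g : Matrix (Fin d) (Fin d) ℝ) - 1).rank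

theorem isProperMap_of_norm_le_comp {E Y : Type*} [NormedAddCommGroup E] [ProperSpace E]
    [TopologicalSpace Y] [T2Space Y] [CompactlyCoherentSpace Y] {f : E → Y} (hf : Continuous f)
    {φ : Y → ℝ} (hφ : Continuous φ) (hle : ∀ v, ‖v‖ ≤ φ (f v)) : IsProperMap f := by
  refine isProperMap_iff_isCompact_preimage.2 ⟨hf, fun K hK => ?_⟩
  obtain ⟨C, hC⟩ := hK.bddAbove_image hφ.continuousOn
  refine Metric.isCompact_of_isClosed_isBounded (hK.isClosed.preimage hf)
    ((Metric.isBounded_closedBall (x := 0) (r := C)).subset fun v hv => ?_)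
  rw [mem_closedBall_zero_iff]
  exact (hle v).trans (hC (Set.mem_image_of_mem φ hv))

lemma act_mul {d : ℕ} (g h : GL (Fin d) ℝ) (v : Fin d → ℝ) :
    act g (act h v) = act (g * h) v := by
  simp [act, Matrix.mulVec_mulVec]

lemma continuous_evalMap {d m : ℕ} (p : Fin m → MvPolynomial (Fin d) ℝ) :
    Continuous (evalMap p) :=
  continuous_pi fun i => continuous_eval (p i)

lemma eval_aeval_eq_eval_evalMap {d m : ℕ} (p : Fin m → MvPolynomial (Fin d) ℝ)
    (F : MvPolynomial (Fin m) ℝ) (v : Fin d → ℝ) :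
    eval v (aeval p F) = eval (evalMap p v) F :=
  comp_aeval_apply p (aeval v) F

section OrbitNormSq

variable {d : ℕ} (G : Subgroup (GL (Fin d) ℝ)) [Fintype G]

def orbitNormSq : MvPolynomial (Fin d) ℝ :=
  ∑ g : G, ∑ i : Fin d,
    (∑ j : Fin d, C (((g : GL (Fin d) ℝ) : Matrix (Fin d) (Fin d) ℝ) i j) * X j) ^ 2

lemma eval_orbitNormSq (v : Fin d → ℝ) :
    eval v (orbitNormSq G) = ∑ g : G, ∑ i : Fin d, act (g : GL (Fin d) ℝ) v i ^ 2 := by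
  simp [orbitNormSq, act, Matrix.mulVec, dotProduct]

lemma isInv_orbitNormSq : IsInv G (orbitNormSq G) := by
  intro h hh v
  rw [eval_orbitNormSq, eval_orbitNormSq]
  simp only [act_mul]
  exact Fintype.sum_equiv (Equiv.mulRight ⟨h, hh⟩) _ _ fun g => by
    rw [Equiv.coe_mulRight, Subgroup.coe_mul]

lemma norm_le_sqrt_eval_orbitNormSq (v : Fin d → ℝ) :
    ‖v‖ ≤ √(eval v (orbitNormSq G)) := by
  refine (pi_norm_le_iff_of_nonneg (Real.sqrt_nonneg _)).2 fun i => ?_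
  rw [Real.norm_eq_abs]
  refine Real.abs_le_sqrt ?_
  have hsq_le : ∀ (g : G) (i : Fin d), act (g : GL (Fin d) ℝ) v i ^ 2 ≤
      ∑ g : G, ∑ i : Fin d, act (g : GL (Fin d) ℝ) v i ^ 2 := fun g i =>
    (Finset.single_le_sum (fun i _ => sq_nonneg (act (g : GL (Fin d) ℝ) v i))
      (Finset.mem_univ i)).trans
    (Finset.single_le_sum (f := fun g : G => ∑ i : Fin d, act (g : GL (Fin d) ℝ) v i ^ 2)
      (fun _ _ => Finset.sum_nonneg fun _ _ => sq_nonneg _) (Finset.mem_univ g))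
  simpa [eval_orbitNormSq, act] using hsq_le 1 i

end OrbitNormSq

theorem stmt_14_general (d m : ℕ) (G : Subgroup (GL (Fin d) ℝ)) [Finite G]
    (p : Fin m → MvPolynomial (Fin d) ℝ)
    (hpgen : ∀ P, IsInv G P ↔ P ∈ Algebra.adjoin ℝ (Set.range p)) :
    IsClosed (Set.range (evalMap p)) := by
  have : Fintype G := Fintype.ofFinite G
  obtain ⟨F, hF⟩ : ∃ F : MvPolynomial (Fin m) ℝ, aeval p F = orbitNormSq G := by
    have hmem := (hpgen _).1 (isInv_orbitNormSq G)
    rwa [Algebra.adjoin_range_eq_range_aeval] at hmem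
  have hle : ∀ v, ‖v‖ ≤ √(eval (evalMap p v) F) := fun v => by
    rw [← eval_aeval_eq_eval_evalMap, hF]
    exact norm_le_sqrt_eval_orbitNormSq G v
  exact (isProperMap_of_norm_le_comp (continuous_evalMap p) (continuous_eval F).sqrt
    hle).isClosedMap.isClosed_range

/-- the image `Y₀ = p(ℝ^d)` is closed in `ℝ^m`. -/
theorem stmt_14 (d m : ℕ) (G : Subgroup (GL (Fin d) ℝ)) [Finite G]
    (p : Fin m → MvPolynomial (Fin d) ℝ) (dd : Fin m → ℕ)
    (hphom : ∀ i, (p i).IsHomogeneous (dd i))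
    (hpgen : ∀ P, IsInv G P ↔ P ∈ Algebra.adjoin ℝ (Set.range p)) :
    IsClosed (Set.range (evalMap p)) :=
  stmt_14_general d m G p hpgen
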